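/- Under the assumption ker_ℝ(A) = 0, the Graver basis of the N-scenario matrix A_N equals the set of vectors (0, 0, ..., v, ..., 0) (with v in a single scenario block and zeros elsewhere) such that (0, v) is an element of the Graver basis of the one-scenario matrix A_1 = [[A, 0], [T, W]]. -/

import Mathlib

/-- Componentwise sign-compatible domination `a ⊑ b` on integer vectors over any index type. -/
def ConfOn {ι : Type*} (a b : ι → ℤ) : Prop := ∀ i, 0 ≤ a i * b i ∧ |a i| ≤ |b i|

section

variable {l m k n : ℕ} (N : ℕ)
variable (A : Matrix (Fin l) (Fin m) ℤ) (T : Matrix (Fin k) (Fin m) ℤ)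
variable (W : Matrix (Fin k) (Fin n) ℤ)

/-- The nonzero integer kernel of the `N`-scenario matrix `A_N`, whose elements are
pairs `(x, v)` with `v i` the `i`-th scenario block. -/
def KerN : Set ((Fin m → ℤ) × (Fin N → Fin n → ℤ)) :=
  {p | p ≠ 0 ∧ A.mulVec p.1 = 0 ∧ ∀ i, T.mulVec p.1 + W.mulVec (p.2 i) = 0}

/-- `⊑` on the `N`-scenario vectors. -/
def ConfN (p q : (Fin m → ℤ) × (Fin N → Fin n → ℤ)) : Prop :=
  ConfOn p.1 q.1 ∧ ∀ i, ConfOn (p.2 i) (q.2 i)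

/-- The Graver basis of `A_N`: `⊑`-minimal elements of its nonzero integer kernel. -/
def GraverN : Set ((Fin m → ℤ) × (Fin N → Fin n → ℤ)) :=
  {p | p ∈ KerN N A T W ∧ ∀ q ∈ KerN N A T W, ConfN N q p → q = p}

/-- The nonzero integer kernel of the one-scenario matrix `A₁ = [[A,0],[T,W]]`. -/
def Ker1 : Set ((Fin m → ℤ) × (Fin n → ℤ)) :=
  {p | p ≠ 0 ∧ A.mulVec p.1 = 0 ∧ T.mulVec p.1 + W.mulVec p.2 = 0}

/-- `⊑` on the one-scenario vectors. -/
def Conf1 (p q : (Fin m → ℤ) × (Fin n → ℤ)) : Prop :=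
  ConfOn p.1 q.1 ∧ ConfOn p.2 q.2

/-- The Graver basis of `A₁`. -/
def Graver1 : Set ((Fin m → ℤ) × (Fin n → ℤ)) :=
  {p | p ∈ Ker1 A T W ∧ ∀ q ∈ Ker1 A T W, Conf1 q p → q = p}

end

/-!
Since `A` has trivial kernel, every kernel element of `A_N` has zero first-stage part, so the
kernel of `A_N` consists of the nonzero tuples of kernel elements of `W`. Keeping one nonzero
block of such a tuple and zeroing the others gives a `⊑`-smaller kernel element, so a Graver
element has a single nonzero block `v`; and among single-block vectors `⊑` is just `⊑` on the
blocks, so minimality of `(0, …, v, …, 0)` for `A_N` is minimality of `(0, v)` for `A₁`.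
-/

open Matrix

lemma confOn_zero_left {ι : Type*} (b : ι → ℤ) : ConfOn 0 b := fun _ => by simp

lemma confOn_refl {ι : Type*} (a : ι → ℤ) : ConfOn a a :=
  fun _ => ⟨mul_self_nonneg _, le_rfl⟩

lemma eq_zero_of_confOn_zero {ι : Type*} {a : ι → ℤ} (h : ConfOn a 0) : a = 0 :=
  funext fun i => abs_nonpos_iff.mp (by simpa using (h i).2)

lemma Matrix.eq_zero_of_mulVec_eq_zero_of_map_intCast {ι κ : Type*} [Fintype κ]
    {A : Matrix ι κ ℤ} (hA : ∀ x : κ → ℝ, (A.map (Int.cast : ℤ → ℝ)) *ᵥ x = 0 → x = 0)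
    {x : κ → ℤ} (hx : A *ᵥ x = 0) : x = 0 := by
  have hcast : (A.map (Int.cast : ℤ → ℝ)) *ᵥ (fun j => (x j : ℝ)) = 0 := by
    funext i
    simpa [hx, Function.comp_def] using (RingHom.map_mulVec (Int.castRingHom ℝ) A x i).symm
  funext j
  simpa using congrFun (hA _ hcast) j

section

variable {l m k n N : ℕ} {A : Matrix (Fin l) (Fin m) ℤ} {T : Matrix (Fin k) (Fin m) ℤ}
  {W : Matrix (Fin k) (Fin n) ℤ}

lemma mem_kerN_zero_single_iff (i : Fin N) (v : Fin n → ℤ) :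
    ((0 : Fin m → ℤ), Pi.single i v) ∈ KerN N A T W ↔ ((0 : Fin m → ℤ), v) ∈ Ker1 A T W := by
  have hblocks : (∀ j, W *ᵥ (Pi.single i v : Fin N → Fin n → ℤ) j = 0) ↔ W *ᵥ v = 0 := by
    refine ⟨fun h => by simpa using h i, fun h j => ?_⟩
    by_cases hj : j = i
    · subst hj; simpa using h
    · simp [hj]
  simp [KerN, Ker1, hblocks]

lemma eq_zero_single_of_confN {q : (Fin m → ℤ) × (Fin N → Fin n → ℤ)} {i : Fin N}
    {v : Fin n → ℤ} (h : ConfN N q (0, Pi.single i v)) : q = (0, Pi.single i (q.2 i)) := by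
  refine Prod.ext (eq_zero_of_confOn_zero h.1) (funext fun j => ?_)
  by_cases hj : j = i
  · subst hj; simp
  · simpa [hj] using eq_zero_of_confOn_zero (by simpa [hj] using h.2 j)

lemma confN_zero_single_iff {i : Fin N} {v w : Fin n → ℤ} :
    ConfN N ((0 : Fin m → ℤ), Pi.single i w) (0, Pi.single i v) ↔ ConfOn w v := by
  refine ⟨fun h => by simpa using h.2 i, fun h => ⟨confOn_zero_left 0, fun j => ?_⟩⟩
  by_cases hj : j = i
  · subst hj; simpa using h
  · simpa [hj] using confOn_zero_left (0 : Fin n → ℤ)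

lemma confN_zero_single_apply {p : (Fin m → ℤ) × (Fin N → Fin n → ℤ)} (hp : p.1 = 0)
    (i : Fin N) : ConfN N (0, Pi.single i (p.2 i)) p := by
  refine ⟨by rw [hp]; exact confOn_zero_left 0, fun j => ?_⟩
  by_cases hj : j = i
  · subst hj; simpa using confOn_refl (p.2 j)
  · simpa [hj] using confOn_zero_left (p.2 j)

lemma mem_graverN_zero_single_iff (i : Fin N) (v : Fin n → ℤ) :
    ((0 : Fin m → ℤ), Pi.single i v) ∈ GraverN N A T W ↔ ((0 : Fin m → ℤ), v) ∈ Graver1 A T W := by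
  refine ⟨fun ⟨hker, hmin⟩ => ⟨(mem_kerN_zero_single_iff i v).1 hker, ?_⟩,
    fun ⟨hker, hmin⟩ => ⟨(mem_kerN_zero_single_iff i v).2 hker, ?_⟩⟩
  · rintro ⟨y, w⟩ hq ⟨hy, hw⟩
    obtain rfl := eq_zero_of_confOn_zero hy
    have := hmin _ ((mem_kerN_zero_single_iff i w).2 hq) (confN_zero_single_iff.2 hw)
    simpa using congrFun (congrArg Prod.snd this) i
  · intro q hq hqv
    have hq_single := eq_zero_single_of_confN hqv
    rw [hq_single] at hq hqv
    have := hmin _ ((mem_kerN_zero_single_iff i _).1 hq) ⟨confOn_zero_left 0,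
      confN_zero_single_iff.1 hqv⟩
    rw [hq_single, (Prod.mk.inj this).2]

lemma exists_eq_zero_single_of_mem_graverN (hA : ∀ x, A *ᵥ x = 0 → x = 0)
    {p : (Fin m → ℤ) × (Fin N → Fin n → ℤ)} (hp : p ∈ GraverN N A T W) :
    ∃ i, p = (0, Pi.single i (p.2 i)) := by
  obtain ⟨⟨hp0, hpA, hpTW⟩, hmin⟩ := hp
  have hp1 : p.1 = 0 := hA _ hpA
  obtain ⟨i, hi⟩ : ∃ i, p.2 i ≠ 0 := by
    by_contra! h
    exact hp0 (Prod.ext hp1 (funext h))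
  have hblock : ((0 : Fin m → ℤ), p.2 i) ∈ Ker1 A T W :=
    ⟨by simpa using hi, by simp, by simpa [hp1] using hpTW i⟩
  exact ⟨i, (hmin _ ((mem_kerN_zero_single_iff i _).2 hblock) (confN_zero_single_apply hp1 i)).symm⟩

end

/-- Under `ker_ℝ(A) = 0`, the Graver basis of the `N`-scenario matrix `A_N` equals the
set of vectors `(0, 0, ..., v, ..., 0)` (with `v` in a single scenario block and zeros
elsewhere) such that `(0, v)` belongs to the Graver basis of the one-scenario matrix
`A₁ = [[A,0],[T,W]]`. -/
theorem graver_stochastic_eq (l m k n N : ℕ)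
    (A : Matrix (Fin l) (Fin m) ℤ) (T : Matrix (Fin k) (Fin m) ℤ)
    (W : Matrix (Fin k) (Fin n) ℤ)
    (hker : ∀ x : Fin m → ℝ, (A.map (Int.cast : ℤ → ℝ)).mulVec x = 0 → x = 0) :
    GraverN N A T W =
      {p | ∃ (i : Fin N) (v : Fin n → ℤ),
        ((0 : Fin m → ℤ), v) ∈ Graver1 A T W ∧
        p = ((0 : Fin m → ℤ), fun j => if j = i then v else 0)} := by
  have hA : ∀ x, A *ᵥ x = 0 → x = 0 := fun _ => A.eq_zero_of_mulVec_eq_zero_of_map_intCast hker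
  have hsingle : ∀ (i : Fin N) (v : Fin n → ℤ), (fun j => if j = i then v else 0) = Pi.single i v :=
    fun i v => funext fun j => (Pi.single_apply i v j).symm
  ext p
  simp only [Set.mem_ofPred_eq, hsingle]
  constructor
  · intro hp
    obtain ⟨i, hpi⟩ := exists_eq_zero_single_of_mem_graverN hA hp
    rw [hpi] at hp
    exact ⟨i, p.2 i, (mem_graverN_zero_single_iff i _).1 hp, hpi⟩
  · rintro ⟨i, v, hv, rfl⟩
    exact (mem_graverN_zero_single_iff i v).2 hv
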